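/- Let x_0, x_1, … ∈ ℝ^d be i.i.d. random vectors with E[x xᵀ] = H, smallest eigenvalue λ_min(H) = μ > 0, and E[‖x‖₂² x xᵀ] ⪯ R_x²·H. Consider the noiseless SGD recursion w_t − w* = (I − η·x_{t−1} x_{t−1}ᵀ)·(w_{t−1} − w*) with stepsize η ≤ 1/R_x² and deterministic initialization w_0. Then for every t ≥ 0: E[‖w_t − w*‖²] ≤ (1 − ημ)^t·‖w_0 − w*‖² ≤ e^{−ημt}·‖w_0 − w*‖². -/

import Mathlib

/-!
Expanding the square, `E‖(I − η x xᵀ) v‖² = ‖v‖² − 2η vᵀHv + η² vᵀ E[‖x‖² x xᵀ] v`, and the two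
moment conditions bound this by `‖v‖² − (2η − η² R_x²) vᵀHv ≤ ‖v‖² − η vᵀHv ≤ (1 − ημ) ‖v‖²`.
Since the samples are independent, integrating out `x_0` first (Tonelli on `ν ⊗ ν^⊗t`) turns
this one-step contraction into the `t`-step one by induction. Nonnegativity of the left-hand side
at a unit vector forces `ημ ≤ 1`, and then `1 − ημ ≤ e^{−ημ}` gives the exponential bound.
-/

set_option autoImplicit false


open MeasureTheory ProbabilityTheory Real Matrix
open scoped ENNReal NNReal RealInnerProductSpace BigOperators

noncomputable section

abbrev Vec (d : ℕ) : Type := EuclideanSpace ℝ (Fin d)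

/-- The smallest eigenvalue of a Hermitian matrix. -/
def lamMin {n : ℕ} {A : Matrix (Fin n) (Fin n) ℝ} (hA : A.IsHermitian) : ℝ :=
  ⨅ i, hA.eigenvalues i

/-- Action of the matrix `I − η x xᵀ` on a vector `v`. -/
def Bapp {d : ℕ} (η : ℝ) (x v : Vec d) : Vec d := v - η • (⟪x, v⟫ • x)

/-- `chainB η x j z k = B_{j+k-1} ⋯ B_{j+1} B_j z` where `B_t = I − η x_t x_tᵀ`. -/
def chainB {d : ℕ} (η : ℝ) (x : ℕ → Vec d) (j : ℕ) (z : Vec d) : ℕ → Vec d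
  | 0 => z
  | k + 1 => Bapp η (x (j + k)) (chainB η x j z k)

/-- Extension of a `Fin N`-indexed family to `ℕ` by zero. -/
def ext0 {β : Type*} [Zero β] {N : ℕ} (f : Fin N → β) : ℕ → β :=
  fun t => if h : t < N then f ⟨t, h⟩ else 0

section SecondMoments

variable {d : ℕ}

lemma norm_mul_apply_le_norm_sq (x : Vec d) (i k : Fin d) : ‖x i * x k‖ ≤ ‖x‖ ^ 2 := by
  rw [norm_mul, sq]
  exact mul_le_mul (PiLp.norm_apply_le x i) (PiLp.norm_apply_le x k) (norm_nonneg _)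
    (norm_nonneg _)

lemma inner_sq_eq_sum (x v : Vec d) :
    ⟪x, v⟫ ^ 2 = ∑ i, ∑ k, v i * v k * (x i * x k) := by
  rw [EuclideanSpace.inner_eq_star_dotProduct, sq, dotProduct, Finset.sum_mul_sum]
  simp only [star_trivial]
  exact Finset.sum_congr rfl fun i _ => Finset.sum_congr rfl fun k _ => by ring

variable {ν : Measure (Vec d)} {g : Vec d → ℝ}

lemma integrable_mul_apply_mul_apply (hg : AEStronglyMeasurable g ν)
    (hint : Integrable (fun x => g x * ‖x‖ ^ 2) ν) (i k : Fin d) :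
    Integrable (fun x => g x * (x i * x k)) ν := by
  refine hint.mono (hg.mul ?_) (.of_forall fun x => ?_)
  · exact ((PiLp.continuous_apply 2 _ i).mul (PiLp.continuous_apply 2 _ k)).aestronglyMeasurable
  · rw [norm_mul, norm_mul (g x), Real.norm_of_nonneg (sq_nonneg ‖x‖)]
    exact mul_le_mul_of_nonneg_left (norm_mul_apply_le_norm_sq x i k) (norm_nonneg _)

lemma mul_inner_sq_eq_sum (x v : Vec d) :
    g x * ⟪x, v⟫ ^ 2 = ∑ i, ∑ k, v i * v k * (g x * (x i * x k)) := by
  simp only [inner_sq_eq_sum, Finset.mul_sum]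
  exact Finset.sum_congr rfl fun i _ => Finset.sum_congr rfl fun k _ => by ring

lemma integrable_mul_inner_sq (hg : AEStronglyMeasurable g ν)
    (hint : Integrable (fun x => g x * ‖x‖ ^ 2) ν) (v : Vec d) :
    Integrable (fun x => g x * ⟪x, v⟫ ^ 2) ν := by
  simp only [mul_inner_sq_eq_sum]
  exact integrable_finsetSum _ fun i _ => integrable_finsetSum _ fun k _ =>
    (integrable_mul_apply_mul_apply hg hint i k).const_mul _

lemma integral_mul_inner_sq (hg : AEStronglyMeasurable g ν)
    (hint : Integrable (fun x => g x * ‖x‖ ^ 2) ν) {A : Matrix (Fin d) (Fin d) ℝ}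
    (hA : ∀ i k, A i k = ∫ x, g x * (x i * x k) ∂ν) (v : Vec d) :
    ∫ x, g x * ⟪x, v⟫ ^ 2 ∂ν = v.ofLp ⬝ᵥ (A *ᵥ v.ofLp) := by
  simp only [mul_inner_sq_eq_sum]
  rw [integral_finsetSum _ fun i _ => integrable_finsetSum _ fun k _ =>
    (integrable_mul_apply_mul_apply hg hint i k).const_mul _]
  simp only [dotProduct, mulVec, Finset.mul_sum]
  refine Finset.sum_congr rfl fun i _ => ?_
  rw [integral_finsetSum _ fun k _ => (integrable_mul_apply_mul_apply hg hint i k).const_mul _]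
  refine Finset.sum_congr rfl fun k _ => ?_
  rw [integral_const_mul, hA]
  ring

end SecondMoments

open scoped MatrixOrder in
lemma posSemidef_sub_lamMin_smul_one {n : ℕ} {A : Matrix (Fin n) (Fin n) ℝ} (hA : A.IsHermitian) :
    (A - lamMin hA • (1 : Matrix (Fin n) (Fin n) ℝ)).PosSemidef := by
  have h : algebraMap ℝ _ (lamMin hA) ≤ A := by
    refine algebraMap_le_of_le_spectrum ?_ hA.isSelfAdjoint
    rw [hA.spectrum_real_eq_range_eigenvalues]
    rintro _ ⟨i, rfl⟩
    exact ciInf_le (Finite.bddBelow_range _) i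
  rwa [Algebra.algebraMap_eq_smul_one, Matrix.le_iff] at h

lemma lamMin_mul_norm_sq_le {d : ℕ} {A : Matrix (Fin d) (Fin d) ℝ} (hA : A.IsHermitian)
    (v : Vec d) : lamMin hA * ‖v‖ ^ 2 ≤ v.ofLp ⬝ᵥ (A *ᵥ v.ofLp) := by
  have h := (posSemidef_sub_lamMin_smul_one hA).dotProduct_mulVec_nonneg v.ofLp
  rw [← real_inner_self_eq_norm_sq, EuclideanSpace.inner_eq_star_dotProduct]
  simpa [sub_mulVec, smul_mulVec] using h

lemma dotProduct_mulVec_le_of_posSemidef_smul_sub {n : ℕ} {A B : Matrix (Fin n) (Fin n) ℝ} {c : ℝ}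
    (h : (c • B - A).PosSemidef) (v : Fin n → ℝ) : v ⬝ᵥ (A *ᵥ v) ≤ c * v ⬝ᵥ (B *ᵥ v) := by
  have := h.dotProduct_mulVec_nonneg v
  simp only [star_trivial, sub_mulVec, smul_mulVec, dotProduct_sub, dotProduct_smul,
    smul_eq_mul] at this
  linarith

section OneStep

variable {d : ℕ}

lemma norm_sq_Bapp (η : ℝ) (x v : Vec d) :
    ‖Bapp η x v‖ ^ 2 = ‖v‖ ^ 2 - 2 * η * ⟪x, v⟫ ^ 2 + η ^ 2 * (‖x‖ ^ 2 * ⟪x, v⟫ ^ 2) := by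
  rw [Bapp, norm_sub_sq_real, real_inner_smul_right, real_inner_smul_right, real_inner_comm v x,
    norm_smul, norm_smul, Real.norm_eq_abs, Real.norm_eq_abs]
  ring_nf
  rw [sq_abs, sq_abs]

variable {ν : Measure (Vec d)} [IsProbabilityMeasure ν] {η : ℝ} {v : Vec d}

lemma integrable_norm_sq_Bapp (h2 : Integrable (fun x => ⟪x, v⟫ ^ 2) ν)
    (h4 : Integrable (fun x => ‖x‖ ^ 2 * ⟪x, v⟫ ^ 2) ν) :
    Integrable (fun x => ‖Bapp η x v‖ ^ 2) ν := by
  simp only [norm_sq_Bapp]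
  exact ((integrable_const _).sub (h2.const_mul _)).add (h4.const_mul _)

lemma integral_norm_sq_Bapp (h2 : Integrable (fun x => ⟪x, v⟫ ^ 2) ν)
    (h4 : Integrable (fun x => ‖x‖ ^ 2 * ⟪x, v⟫ ^ 2) ν) :
    ∫ x, ‖Bapp η x v‖ ^ 2 ∂ν =
      ‖v‖ ^ 2 - 2 * η * ∫ x, ⟪x, v⟫ ^ 2 ∂ν + η ^ 2 * ∫ x, ‖x‖ ^ 2 * ⟪x, v⟫ ^ 2 ∂ν := by
  have h2' : Integrable (fun x => 2 * η * ⟪x, v⟫ ^ 2) ν := h2.const_mul _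
  have h4' : Integrable (fun x => η ^ 2 * (‖x‖ ^ 2 * ⟪x, v⟫ ^ 2)) ν := h4.const_mul _
  have h1 : Integrable (fun x => ‖v‖ ^ 2 - 2 * η * ⟪x, v⟫ ^ 2) ν := (integrable_const _).sub h2'
  simp only [norm_sq_Bapp]
  rw [integral_add h1 h4',
    integral_sub (integrable_const _) h2', integral_const, integral_const_mul,
    integral_const_mul, probReal_univ, one_smul]

lemma integral_norm_sq_Bapp_le {μ R : ℝ} (hη : 0 ≤ η) (hηR : η * R ≤ 1)
    (h2 : Integrable (fun x => ⟪x, v⟫ ^ 2) ν) (h4 : Integrable (fun x => ‖x‖ ^ 2 * ⟪x, v⟫ ^ 2) ν)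
    (hlow : μ * ‖v‖ ^ 2 ≤ ∫ x, ⟪x, v⟫ ^ 2 ∂ν)
    (hup : ∫ x, ‖x‖ ^ 2 * ⟪x, v⟫ ^ 2 ∂ν ≤ R * ∫ x, ⟪x, v⟫ ^ 2 ∂ν) :
    ∫ x, ‖Bapp η x v‖ ^ 2 ∂ν ≤ (1 - η * μ) * ‖v‖ ^ 2 := by
  rw [integral_norm_sq_Bapp h2 h4]
  set a := ∫ x, ⟪x, v⟫ ^ 2 ∂ν
  have ha : 0 ≤ a := integral_nonneg fun x => sq_nonneg _
  have hsecond : η ^ 2 * ∫ x, ‖x‖ ^ 2 * ⟪x, v⟫ ^ 2 ∂ν ≤ η * a :=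
    calc η ^ 2 * ∫ x, ‖x‖ ^ 2 * ⟪x, v⟫ ^ 2 ∂ν ≤ η ^ 2 * (R * a) := by gcongr
      _ = (η * R) * (η * a) := by ring
      _ ≤ η * a := mul_le_of_le_one_left (mul_nonneg hη ha) hηR
  nlinarith [mul_le_mul_of_nonneg_left hlow hη]

end OneStep

lemma lintegral_pi_fin_succ {α : Type*} [MeasurableSpace α] (ν : Measure α) [SigmaFinite ν]
    {t : ℕ} {f : (Fin (t + 1) → α) → ℝ≥0∞} (hf : Measurable f) :
    ∫⁻ xs, f xs ∂(Measure.pi fun _ => ν) =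
      ∫⁻ x, ∫⁻ xs, f (Fin.cons x xs) ∂(Measure.pi fun _ => ν) ∂ν := by
  have e := (measurePreserving_piFinSuccAbove (fun _ : Fin (t + 1) => ν) 0).symm
  rw [← e.lintegral_comp hf]
  refine (lintegral_prod _ (hf.comp e.measurable).aemeasurable).trans ?_
  simp [Fin.consEquiv]

section Chain

variable {d : ℕ} {η : ℝ}

lemma chainB_succ (y : ℕ → Vec d) (v : Vec d) (k : ℕ) :
    chainB η y 0 v (k + 1) = chainB η (fun n => y (n + 1)) 0 (Bapp η (y 0) v) k := by
  induction k with
  | zero => rfl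
  | succ k ih => simp only [chainB, zero_add] at ih ⊢; rw [ih]

lemma ext0_cons_zero {β : Type*} [Zero β] {t : ℕ} (x : β) (xs : Fin t → β) :
    ext0 (Fin.cons x xs : Fin (t + 1) → β) 0 = x := rfl

lemma ext0_cons_succ {β : Type*} [Zero β] {t : ℕ} (x : β) (xs : Fin t → β) :
    (fun n => ext0 (Fin.cons x xs : Fin (t + 1) → β) (n + 1)) = ext0 xs := by
  funext n
  by_cases hn : n < t
  · simpa [ext0, hn] using Fin.cons_succ (α := fun _ => β) x xs ⟨n, hn⟩
  · simp [ext0, hn]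

lemma chainB_ext0_cons {t : ℕ} (x : Vec d) (xs : Fin t → Vec d) (v : Vec d) :
    chainB η (ext0 (Fin.cons x xs : Fin (t + 1) → Vec d)) 0 v (t + 1) =
      chainB η (ext0 xs) 0 (Bapp η x v) t := by
  rw [chainB_succ, ext0_cons_succ, ext0_cons_zero]

lemma continuous_ext0_apply {β : Type*} [TopologicalSpace β] [Zero β] {N : ℕ} (n : ℕ) :
    Continuous fun xs : Fin N → β => ext0 xs n := by
  by_cases hn : n < N
  · simpa [ext0, hn] using continuous_apply _
  · simpa [ext0, hn] using continuous_const

lemma continuous_chainB_ext0 {N : ℕ} (v : Vec d) (k : ℕ) :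
    Continuous fun xs : Fin N → Vec d => chainB η (ext0 xs) 0 v k := by
  induction k with
  | zero => exact continuous_const
  | succ k ih =>
    have hx := continuous_ext0_apply (β := Vec d) (N := N) (0 + k)
    exact ih.sub (((hx.inner (𝕜 := ℝ) ih).smul hx).const_smul η)

variable {ν : Measure (Vec d)} [SigmaFinite ν]

-- Lower integrals need no integrability of the iterates under the product measure.
lemma lintegral_chainB_le {V : Vec d → ℝ≥0∞} (hV : Measurable V) {c : ℝ≥0∞} (hc : c ≠ ⊤)
    (hstep : ∀ v, ∫⁻ x, V (Bapp η x v) ∂ν ≤ c * V v) (t : ℕ) (v : Vec d) :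
    ∫⁻ xs, V (chainB η (ext0 xs) 0 v t) ∂(Measure.pi fun _ : Fin t => ν) ≤ c ^ t * V v := by
  induction t generalizing v with
  | zero => simp [chainB]
  | succ t ih =>
    have hmeas : Measurable fun xs : Fin (t + 1) → Vec d => V (chainB η (ext0 xs) 0 v (t + 1)) :=
      hV.comp (continuous_chainB_ext0 v (t + 1)).measurable
    calc ∫⁻ xs, V (chainB η (ext0 xs) 0 v (t + 1)) ∂(Measure.pi fun _ => ν)
        = ∫⁻ x, ∫⁻ xs, V (chainB η (ext0 xs) 0 (Bapp η x v) t) ∂(Measure.pi fun _ => ν) ∂ν := by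
          simp only [lintegral_pi_fin_succ ν hmeas, chainB_ext0_cons]
      _ ≤ ∫⁻ x, c ^ t * V (Bapp η x v) ∂ν := lintegral_mono fun x => ih _
      _ = c ^ t * ∫⁻ x, V (Bapp η x v) ∂ν := lintegral_const_mul' _ _ (ENNReal.pow_ne_top hc)
      _ ≤ c ^ t * (c * V v) := by gcongr; exact hstep v
      _ = c ^ (t + 1) * V v := by ring

lemma integral_norm_sq_chainB_le {c : ℝ} (hc : 0 ≤ c)
    (hint : ∀ v, Integrable (fun x => ‖Bapp η x v‖ ^ 2) ν)
    (hstep : ∀ v, ∫ x, ‖Bapp η x v‖ ^ 2 ∂ν ≤ c * ‖v‖ ^ 2) (t : ℕ) (v : Vec d) :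
    ∫ xs, ‖chainB η (ext0 xs) 0 v t‖ ^ 2 ∂(Measure.pi fun _ : Fin t => ν) ≤ c ^ t * ‖v‖ ^ 2 := by
  have hV : Measurable fun w : Vec d => ENNReal.ofReal (‖w‖ ^ 2) := by fun_prop
  have hstep' : ∀ v, ∫⁻ x, ENNReal.ofReal (‖Bapp η x v‖ ^ 2) ∂ν ≤
      ENNReal.ofReal c * ENNReal.ofReal (‖v‖ ^ 2) := fun v => by
    rw [← ofReal_integral_eq_lintegral_ofReal (hint v) (.of_forall fun _ => sq_nonneg _),
      ← ENNReal.ofReal_mul hc]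
    exact ENNReal.ofReal_le_ofReal (hstep v)
  have h := lintegral_chainB_le hV ENNReal.ofReal_ne_top hstep' t v
  rw [← ENNReal.ofReal_pow hc, ← ENNReal.ofReal_mul (pow_nonneg hc t)] at h
  have hcont : Continuous fun xs : Fin t → Vec d => ‖chainB η (ext0 xs) 0 v t‖ ^ 2 :=
    (continuous_chainB_ext0 v t).norm.pow 2
  rw [integral_eq_lintegral_of_nonneg_ae (.of_forall fun _ => sq_nonneg _)
    hcont.aestronglyMeasurable]
  exact ENNReal.toReal_le_of_le_ofReal (by positivity) h

end Chain

lemma one_sub_pow_le_exp_neg_mul {a : ℝ} (ha : 0 ≤ 1 - a) (t : ℕ) :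
    (1 - a) ^ t ≤ Real.exp (-a * t) := by
  rw [mul_comm, Real.exp_nat_mul]
  exact pow_le_pow_left₀ ha (one_sub_le_exp_neg a) t

theorem noiseless_sgd_contraction_general
    (d : ℕ) (hd : 0 < d)
    (ν : Measure (Vec d)) [IsProbabilityMeasure ν]
    (hmom : Integrable (fun x : Vec d => ‖x‖ ^ 2) ν)
    (hmom4 : Integrable (fun x : Vec d => ‖x‖ ^ 4) ν)
    (H M4 : Matrix (Fin d) (Fin d) ℝ)
    (hH : ∀ i k, H i k = ∫ x, x i * x k ∂ν)
    (hM4 : ∀ i k, M4 i k = ∫ x, ‖x‖ ^ 2 * (x i * x k) ∂ν)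
    (hHherm : H.IsHermitian) (μ : ℝ) (hμdef : μ = lamMin hHherm)
    (Rx : ℝ) (hRx : (Rx ^ 2 • H - M4).PosSemidef)
    (η : ℝ) (hη0 : 0 < η) (hη : η ≤ 1 / Rx ^ 2)
    (w0 wstar : Vec d) :
    ∀ t : ℕ,
      (∫ x, ‖chainB η (ext0 x) 0 (w0 - wstar) t‖ ^ 2
          ∂(Measure.pi fun _ : Fin t => ν)) ≤
        (1 - η * μ) ^ t * ‖w0 - wstar‖ ^ 2 ∧
      (1 - η * μ) ^ t * ‖w0 - wstar‖ ^ 2 ≤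
        Real.exp (-(η * μ) * (t : ℝ)) * ‖w0 - wstar‖ ^ 2 := by
  have hηR : η * Rx ^ 2 ≤ 1 := by
    rcases (sq_nonneg Rx).eq_or_lt with h | h
    · simp [← h]
    · rwa [le_div_iff₀ h] at hη
  have hmom4' : Integrable (fun x : Vec d => ‖x‖ ^ 2 * ‖x‖ ^ 2) ν := by
    simpa [← pow_add] using hmom4
  have hmeas : AEStronglyMeasurable (fun x : Vec d => ‖x‖ ^ 2) ν := by fun_prop
  have hH_eq v : ∫ x, ⟪x, v⟫ ^ 2 ∂ν = v.ofLp ⬝ᵥ (H *ᵥ v.ofLp) := by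
    simpa using integral_mul_inner_sq (g := 1) aestronglyMeasurable_const (by simpa using hmom)
      (by simpa using hH) v
  have hM4_eq v : ∫ x, ‖x‖ ^ 2 * ⟪x, v⟫ ^ 2 ∂ν = v.ofLp ⬝ᵥ (M4 *ᵥ v.ofLp) :=
    integral_mul_inner_sq hmeas hmom4' hM4 v
  have hint2 v : Integrable (fun x => ⟪x, v⟫ ^ 2) ν := by
    simpa using integrable_mul_inner_sq (g := 1) aestronglyMeasurable_const (by simpa using hmom) v
  have hint4 v : Integrable (fun x => ‖x‖ ^ 2 * ⟪x, v⟫ ^ 2) ν :=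
    integrable_mul_inner_sq hmeas hmom4' v
  have hstep v : ∫ x, ‖Bapp η x v‖ ^ 2 ∂ν ≤ (1 - η * μ) * ‖v‖ ^ 2 := by
    refine integral_norm_sq_Bapp_le hη0.le hηR (hint2 v) (hint4 v) ?_ ?_
    · rw [hH_eq, hμdef]
      exact lamMin_mul_norm_sq_le hHherm v
    · rw [hH_eq, hM4_eq]
      exact dotProduct_mulVec_le_of_posSemidef_smul_sub hRx v.ofLp
  have hcontr : 0 ≤ 1 - η * μ := by
    let e : Vec d := EuclideanSpace.single ⟨0, hd⟩ 1
    simpa [e] using (integral_nonneg fun x => sq_nonneg ‖Bapp η x e‖).trans (hstep e)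
  intro t
  exact ⟨integral_norm_sq_chainB_le hcontr (fun v => integrable_norm_sq_Bapp (hint2 v) (hint4 v))
    hstep t _, by gcongr; exact one_sub_pow_le_exp_neg_mul hcontr t⟩

/-- contraction of the noiseless SGD recursion
`w_t − w* = (I − η x_{t−1} x_{t−1}ᵀ)(w_{t−1} − w*)` for i.i.d. `x` with `E[x xᵀ] = H`,
`λ_min(H) = μ > 0`, `E[‖x‖² x xᵀ] ⪯ R_x² H` and stepsize `η ≤ 1/R_x²`:
`E‖w_t − w*‖² ≤ (1 − ημ)^t ‖w_0 − w*‖² ≤ e^{−ημt} ‖w_0 − w*‖²` for every `t ≥ 0`. -/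
theorem noiseless_sgd_contraction
    (d : ℕ) (hd : 0 < d)
    (ν : Measure (Vec d)) [IsProbabilityMeasure ν]
    (hmom : Integrable (fun x : Vec d => ‖x‖ ^ 2) ν)
    (hmom4 : Integrable (fun x : Vec d => ‖x‖ ^ 4) ν)
    (H M4 : Matrix (Fin d) (Fin d) ℝ)
    (hH : ∀ i k, H i k = ∫ x, x i * x k ∂ν)
    (hM4 : ∀ i k, M4 i k = ∫ x, ‖x‖ ^ 2 * (x i * x k) ∂ν)
    (hHherm : H.IsHermitian) (μ : ℝ) (hμdef : μ = lamMin hHherm) (hμ : 0 < μ)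
    (Rx : ℝ) (hRx : (Rx ^ 2 • H - M4).PosSemidef)
    (η : ℝ) (hη0 : 0 < η) (hη : η ≤ 1 / Rx ^ 2)
    (w0 wstar : Vec d) :
    ∀ t : ℕ,
      (∫ x, ‖chainB η (ext0 x) 0 (w0 - wstar) t‖ ^ 2
          ∂(Measure.pi fun _ : Fin t => ν)) ≤
        (1 - η * μ) ^ t * ‖w0 - wstar‖ ^ 2 ∧
      (1 - η * μ) ^ t * ‖w0 - wstar‖ ^ 2 ≤
        Real.exp (-(η * μ) * (t : ℝ)) * ‖w0 - wstar‖ ^ 2 :=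
  noiseless_sgd_contraction_general d hd ν hmom hmom4 H M4 hH hM4 hHherm μ hμdef Rx hRx η hη0 hη w0
    wstar
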